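/- arXiv:2309.06985 — 2 statements merged into one kernel-verified Lean document; each statement's English description precedes it below -/
import Mathlib

section
/- For every real ρ > 0, the matrix Σ_c + ρ v_p v_pᵀ is invertible and its inverse equals Ω_c + ρ⁻¹ v_p v_pᵀ; that is, (Σ_c + ρ v_p v_pᵀ)(Ω_c + ρ⁻¹ v_p v_pᵀ) = I_p. -/
open Matrix

noncomputable section

/-- The all-ones vector in `ℝ^p`. -/
def onesV (p : ℕ) : Fin p → ℝ := fun _ => 1

/-- The centering matrix `G = I_p − p⁻¹ 1_p 1_pᵀ`. -/
def Gmat (p : ℕ) : Matrix (Fin p) (Fin p) ℝ :=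
  1 - (p : ℝ)⁻¹ • Matrix.vecMulVec (onesV p) (onesV p)

/-- The compositional precision matrix `Ω_c = Ω₀ − Ω₀ 1_p 1_pᵀ Ω₀ / (1_pᵀ Ω₀ 1_p)`. -/
def OmegaC {p : ℕ} (Ω : Matrix (Fin p) (Fin p) ℝ) : Matrix (Fin p) (Fin p) ℝ :=
  Ω - (onesV p ⬝ᵥ Ω.mulVec (onesV p))⁻¹ •
    Matrix.vecMulVec (Ω.mulVec (onesV p)) (Matrix.vecMul (onesV p) Ω)

/-- The centered log-ratio covariance matrix `Σ_c = G Σ₀ G` with `Σ₀ = Ω₀⁻¹`. -/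
def SigmaC {p : ℕ} (Ω : Matrix (Fin p) (Fin p) ℝ) : Matrix (Fin p) (Fin p) ℝ :=
  Gmat p * Ω⁻¹ * Gmat p

/-- The entrywise `ℓ∞`-norm `‖A‖_max = max_{i,j} |a_ij|`. -/
def maxNorm {p : ℕ} (A : Matrix (Fin p) (Fin p) ℝ) : ℝ := ⨆ i, ⨆ j, |A i j|

/-- The matrix `ℓ1`-norm `‖A‖_{L1} = max_j Σ_i |a_ij|`. -/
def l1Norm {p : ℕ} (A : Matrix (Fin p) (Fin p) ℝ) : ℝ := ⨆ j, ∑ i, |A i j|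

/-- The vector `v_p = 1_p/√p`. -/
def vP (p : ℕ) : Fin p → ℝ := fun _ => (Real.sqrt p)⁻¹

/-! With `P = v_p v_pᵀ` the orthogonal projection onto the constants, `G = I − P`. Since `G v_p = 0`
we get `Σ_c P = 0`, and since `1_pᵀ Ω_c = 0` we get `P Ω_c = 0` and `G Ω_c = Ω_c`. Moreover
`Ω₀⁻¹ Ω_c = I − 1_p (1_pᵀ Ω₀) / (1_pᵀ Ω₀ 1_p)`, whose correction term is killed by `G`, so
`Σ_c Ω_c = G Ω₀⁻¹ Ω_c = G`. Expanding, `(Σ_c + ρ P)(Ω_c + ρ⁻¹ P) = G + P² = I`. -/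

lemma add_smul_mul_add_inv_smul_eq_one {𝕜 A : Type*} [Field 𝕜] [Ring A] [Algebra 𝕜 A]
    {S Q P : A} {ρ : 𝕜} (hρ : ρ ≠ 0) (hSQ : S * Q = 1 - P) (hSP : S * P = 0) (hPQ : P * Q = 0)
    (hP : P * P = P) : (S + ρ • P) * (Q + ρ⁻¹ • P) = 1 := by
  simp only [add_mul, mul_add, smul_mul_assoc, mul_smul_comm, hSQ, hSP, hPQ, hP, smul_zero,
    add_zero, zero_add, smul_smul, inv_mul_cancel₀ hρ, one_smul, sub_add_cancel]

lemma vP_eq_smul_onesV (p : ℕ) : vP p = (Real.sqrt p)⁻¹ • onesV p := by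
  funext i
  simp [vP, onesV]

lemma vecMulVec_vP_vP (p : ℕ) :
    vecMulVec (vP p) (vP p) = (p : ℝ)⁻¹ • vecMulVec (onesV p) (onesV p) := by
  rw [vP_eq_smul_onesV, smul_vecMulVec, vecMulVec_smul, smul_smul, ← mul_inv,
    Real.mul_self_sqrt p.cast_nonneg]

lemma Gmat_eq_one_sub_vecMulVec_vP (p : ℕ) : Gmat p = 1 - vecMulVec (vP p) (vP p) := by
  rw [Gmat, vecMulVec_vP_vP]

lemma vP_dotProduct_vP {p : ℕ} (hp : p ≠ 0) : vP p ⬝ᵥ vP p = 1 := by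
  have hp' : (p : ℝ) ≠ 0 := Nat.cast_ne_zero.mpr hp
  simp only [dotProduct, vP, Finset.sum_const, Finset.card_univ, Fintype.card_fin, nsmul_eq_mul]
  rw [← mul_inv, Real.mul_self_sqrt p.cast_nonneg, mul_inv_cancel₀ hp']

lemma vecMulVec_vP_mul_self {p : ℕ} (hp : p ≠ 0) :
    vecMulVec (vP p) (vP p) * vecMulVec (vP p) (vP p) = vecMulVec (vP p) (vP p) := by
  rw [vecMulVec_mul_vecMulVec, vP_dotProduct_vP hp, one_smul]

lemma Gmat_mulVec_onesV (p : ℕ) : Gmat p *ᵥ onesV p = 0 := by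
  funext i
  have hp : (p : ℝ) ≠ 0 := Nat.cast_ne_zero.mpr (Fin.pos i).ne'
  simp [Gmat, sub_mulVec, smul_mulVec, vecMulVec_mulVec, onesV, dotProduct, hp]

lemma Gmat_mulVec_vP (p : ℕ) : Gmat p *ᵥ vP p = 0 := by
  rw [vP_eq_smul_onesV, mulVec_smul, Gmat_mulVec_onesV, smul_zero]

lemma SigmaC_mul_vecMulVec_vP {p : ℕ} (Ω : Matrix (Fin p) (Fin p) ℝ) :
    SigmaC Ω * vecMulVec (vP p) (vP p) = 0 := by
  rw [SigmaC, Matrix.mul_assoc, mul_vecMulVec, Gmat_mulVec_vP, zero_vecMulVec, Matrix.mul_zero]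

lemma onesV_vecMul_OmegaC {p : ℕ} {Ω : Matrix (Fin p) (Fin p) ℝ}
    (hΩ : onesV p ⬝ᵥ Ω *ᵥ onesV p ≠ 0) : onesV p ᵥ* OmegaC Ω = 0 := by
  rw [OmegaC, vecMul_sub, vecMul_smul, vecMul_vecMulVec, smul_smul, inv_mul_cancel₀ hΩ, one_smul,
    sub_self]

lemma vecMulVec_vP_mul_OmegaC {p : ℕ} {Ω : Matrix (Fin p) (Fin p) ℝ}
    (hΩ : onesV p ⬝ᵥ Ω *ᵥ onesV p ≠ 0) : vecMulVec (vP p) (vP p) * OmegaC Ω = 0 := by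
  rw [vecMulVec_mul, vP_eq_smul_onesV, smul_vecMul, onesV_vecMul_OmegaC hΩ, smul_zero,
    vecMulVec_zero]

lemma Gmat_mul_OmegaC {p : ℕ} {Ω : Matrix (Fin p) (Fin p) ℝ} (hΩ : onesV p ⬝ᵥ Ω *ᵥ onesV p ≠ 0) :
    Gmat p * OmegaC Ω = OmegaC Ω := by
  rw [Gmat, Matrix.sub_mul, Matrix.one_mul, Matrix.smul_mul, vecMulVec_mul,
    onesV_vecMul_OmegaC hΩ, vecMulVec_zero, smul_zero, sub_zero]

lemma inv_mul_OmegaC {p : ℕ} {Ω : Matrix (Fin p) (Fin p) ℝ} (hΩ : IsUnit Ω.det) :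
    Ω⁻¹ * OmegaC Ω =
      1 - (onesV p ⬝ᵥ Ω *ᵥ onesV p)⁻¹ • vecMulVec (onesV p) (onesV p ᵥ* Ω) := by
  rw [OmegaC, Matrix.mul_sub, nonsing_inv_mul Ω hΩ, Matrix.mul_smul, mul_vecMulVec, mulVec_mulVec,
    nonsing_inv_mul Ω hΩ, one_mulVec]

lemma SigmaC_mul_OmegaC {p : ℕ} {Ω : Matrix (Fin p) (Fin p) ℝ} (hdet : IsUnit Ω.det)
    (hΩ : onesV p ⬝ᵥ Ω *ᵥ onesV p ≠ 0) : SigmaC Ω * OmegaC Ω = Gmat p := by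
  rw [SigmaC, Matrix.mul_assoc, Gmat_mul_OmegaC hΩ, Matrix.mul_assoc, inv_mul_OmegaC hdet,
    Matrix.mul_sub, Matrix.mul_one, Matrix.mul_smul, mul_vecMulVec, Gmat_mulVec_onesV,
    zero_vecMulVec, smul_zero, sub_zero]

/-- for every `ρ > 0`, `Σ_c + ρ v_p v_pᵀ` is invertible with inverse
`Ω_c + ρ⁻¹ v_p v_pᵀ`. -/
theorem sigmaC_rank_one_correction_inverse (p : ℕ) (hp : 2 ≤ p)
    (Ω₀ : Matrix (Fin p) (Fin p) ℝ) (hΩ₀ : Ω₀.PosDef) (ρ : ℝ) (hρ : 0 < ρ) :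
    IsUnit (SigmaC Ω₀ + ρ • Matrix.vecMulVec (vP p) (vP p)) ∧
    (SigmaC Ω₀ + ρ • Matrix.vecMulVec (vP p) (vP p)) *
      (OmegaC Ω₀ + ρ⁻¹ • Matrix.vecMulVec (vP p) (vP p)) = 1 := by
  have hp0 : p ≠ 0 := by omega
  have hones : onesV p ≠ 0 := fun h => by simpa [onesV] using congrFun h ⟨0, by omega⟩
  have hquad : onesV p ⬝ᵥ Ω₀ *ᵥ onesV p ≠ 0 := by
    simpa using (hΩ₀.dotProduct_mulVec_pos hones).ne'
  have hdet : IsUnit Ω₀.det := (isUnit_iff_isUnit_det _).1 hΩ₀.isUnit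
  have hprod := add_smul_mul_add_inv_smul_eq_one hρ.ne'
    (by rw [SigmaC_mul_OmegaC hdet hquad, Gmat_eq_one_sub_vecMulVec_vP])
    (SigmaC_mul_vecMulVec_vP Ω₀) (vecMulVec_vP_mul_OmegaC hquad) (vecMulVec_vP_mul_self hp0)
  exact ⟨(isUnit_iff_isUnit_det _).2 (isUnit_det_of_right_inverse hprod), hprod⟩

end
end

section
/- Suppose R > 1, the eigenvalues of Ω₀ all lie in the interval [1/R, R], and ‖Ω₀‖_{L1} ≤ M_p. Then the entrywise identification error between the basis and compositional precision matrices satisfies R⁻³/p ≤ ‖Ω₀ − Ω_c‖_max ≤ R M_p²/p. -/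
/-!
With `v = Ω₀ 1_p` and `s = 1_pᵀ Ω₀ 1_p = ∑ i, v i`, the difference `Ω₀ − Ω_c` is the rank-one
matrix `s⁻¹ v vᵀ`. The Rayleigh bound gives `s ≥ p / R`. Every `|v i|` is an absolute row sum of
the symmetric `Ω₀`, hence at most `‖Ω₀‖_{L1} ≤ M_p`, so all entries are at most `M_p² / s`.
Conversely some `v i` is at least the mean `s / p`, so the diagonal entry `s⁻¹ v i²` is at least
`s / p² ≥ 1 / (R p)`.
-/

open Matrix

noncomputable section

open scoped MatrixOrder

theorem Matrix.IsHermitian.mul_dotProduct_self_le_dotProduct_mulVec {n : Type*} [Fintype n]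
    [DecidableEq n] {A : Matrix n n ℝ} (hA : A.IsHermitian) {c : ℝ}
    (hc : ∀ i, c ≤ hA.eigenvalues i) (x : n → ℝ) : c * (x ⬝ᵥ x) ≤ x ⬝ᵥ A *ᵥ x := by
  have hle : algebraMap ℝ _ c ≤ A := by
    rw [algebraMap_le_iff_le_spectrum hA.isSelfAdjoint, hA.spectrum_real_eq_range_eigenvalues]
    rintro _ ⟨i, rfl⟩
    exact hc i
  simpa [sub_mulVec, dotProduct_sub, Algebra.algebraMap_eq_smul_one, smul_mulVec,
    dotProduct_smul] using (Matrix.le_iff.mp hle).dotProduct_mulVec_nonneg x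

section

variable {p : ℕ}

theorem onesV_dotProduct (v : Fin p → ℝ) : onesV p ⬝ᵥ v = ∑ i, v i := by
  simp [onesV, dotProduct]

theorem onesV_dotProduct_onesV : onesV p ⬝ᵥ onesV p = p := by
  simp [onesV_dotProduct, onesV]

theorem mulVec_onesV_apply (A : Matrix (Fin p) (Fin p) ℝ) (i : Fin p) :
    (A *ᵥ onesV p) i = ∑ j, A i j := by
  simp [mulVec, dotProduct, onesV]

theorem sub_omegaC_eq_smul_vecMulVec {Ω : Matrix (Fin p) (Fin p) ℝ} (hΩ : Ω.IsSymm) :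
    Ω - OmegaC Ω =
      (onesV p ⬝ᵥ Ω *ᵥ onesV p)⁻¹ • vecMulVec (Ω *ᵥ onesV p) (Ω *ᵥ onesV p) := by
  rw [OmegaC, sub_sub_cancel, ← vecMul_transpose, hΩ.eq]

theorem abs_mulVec_onesV_apply_le_l1Norm {Ω : Matrix (Fin p) (Fin p) ℝ} (hΩ : Ω.IsSymm)
    (i : Fin p) : |(Ω *ᵥ onesV p) i| ≤ l1Norm Ω :=
  calc |(Ω *ᵥ onesV p) i| ≤ ∑ j, |Ω i j| := by
        rw [mulVec_onesV_apply]
        exact Finset.abs_sum_le_sum_abs _ _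
    _ = ∑ j, |Ω j i| := by simp only [hΩ.apply i]
    _ ≤ l1Norm Ω := le_ciSup (f := fun j => ∑ k, |Ω k j|) (Set.finite_range _).bddAbove i

theorem abs_apply_le_maxNorm (A : Matrix (Fin p) (Fin p) ℝ) (i j : Fin p) :
    |A i j| ≤ maxNorm A :=
  (le_ciSup (f := fun j => |A i j|) (Set.finite_range _).bddAbove j).trans
    (le_ciSup (f := fun i => ⨆ j, |A i j|) (Set.finite_range _).bddAbove i)

theorem maxNorm_le {A : Matrix (Fin p) (Fin p) ℝ} {c : ℝ} (hc : 0 ≤ c)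
    (h : ∀ i j, |A i j| ≤ c) : maxNorm A ≤ c :=
  Real.iSup_le (fun i => Real.iSup_le (h i) hc) hc

theorem sum_div_sq_le_maxNorm_smul_vecMulVec_self {v : Fin p → ℝ} (hv : 0 < ∑ i, v i) :
    (∑ i, v i) / (p : ℝ) ^ 2 ≤ maxNorm ((∑ i, v i)⁻¹ • vecMulVec v v) := by
  set s := ∑ i, v i
  have hne : (Finset.univ : Finset (Fin p)).Nonempty :=
    Finset.nonempty_of_sum_ne_zero hv.ne'
  have hp : (0 : ℝ) < p := by simpa using hne.card_pos
  obtain ⟨i, -, hi⟩ : ∃ i ∈ Finset.univ, s / p ≤ v i := by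
    refine Finset.exists_le_of_sum_le hne ?_
    simp [Finset.sum_const, mul_div_cancel₀ _ hp.ne', s]
  calc s / (p : ℝ) ^ 2 = s⁻¹ * ((s / p) * (s / p)) := by field_simp
    _ ≤ s⁻¹ * (v i * v i) := by
        have hsp : 0 ≤ s / p := by positivity
        gcongr
        exact hsp.trans hi
    _ ≤ |(s⁻¹ • vecMulVec v v) i i| := le_abs_self _
    _ ≤ maxNorm (s⁻¹ • vecMulVec v v) := abs_apply_le_maxNorm _ i i

theorem maxNorm_smul_vecMulVec_self_le {v : Fin p → ℝ} {s M : ℝ} (hs : 0 < s)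
    (hv : ∀ i, |v i| ≤ M) : maxNorm (s⁻¹ • vecMulVec v v) ≤ M ^ 2 / s := by
  refine maxNorm_le (by positivity) fun i j => ?_
  have hvv : |v i| * |v j| ≤ M * M :=
    mul_le_mul (hv i) (hv j) (abs_nonneg _) ((abs_nonneg _).trans (hv i))
  calc |(s⁻¹ • vecMulVec v v) i j| = s⁻¹ * (|v i| * |v j|) := by
        simp [vecMulVec_apply, abs_mul, abs_of_pos hs]
    _ ≤ s⁻¹ * (M * M) := by gcongr
    _ = M ^ 2 / s := by ring

end

theorem identification_error_bounds_general (p : ℕ) (hp : 2 ≤ p)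
    (Ω₀ : Matrix (Fin p) (Fin p) ℝ) (hΩ₀ : Ω₀.PosDef) (R M : ℝ) (hR : 1 < R)
    (heig : ∀ i, hΩ₀.isHermitian.eigenvalues i ∈ Set.Icc R⁻¹ R)
    (hL1 : l1Norm Ω₀ ≤ M) :
    R⁻¹ ^ 3 / (p : ℝ) ≤ maxNorm (Ω₀ - OmegaC Ω₀) ∧
    maxNorm (Ω₀ - OmegaC Ω₀) ≤ R * M ^ 2 / (p : ℝ) := by
  have hsymm : Ω₀.IsSymm := isHermitian_iff_isSymm.mp hΩ₀.isHermitian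
  have hp0 : (0 : ℝ) < p := Nat.cast_pos.mpr (by omega)
  set v := Ω₀ *ᵥ onesV p
  have hs : R⁻¹ * p ≤ ∑ i, v i := by
    have := hΩ₀.isHermitian.mul_dotProduct_self_le_dotProduct_mulVec
      (fun i => (heig i).1) (onesV p)
    rwa [onesV_dotProduct_onesV, onesV_dotProduct] at this
  have hs0 : 0 < ∑ i, v i := lt_of_lt_of_le (by positivity) hs
  rw [sub_omegaC_eq_smul_vecMulVec hsymm, onesV_dotProduct]
  constructor
  · calc R⁻¹ ^ 3 / (p : ℝ) ≤ R⁻¹ / p := by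
          gcongr
          exact pow_le_of_le_one (by positivity) (inv_le_one_of_one_le₀ hR.le) (by norm_num)
      _ = R⁻¹ * p / (p : ℝ) ^ 2 := by field_simp
      _ ≤ (∑ i, v i) / (p : ℝ) ^ 2 := by gcongr
      _ ≤ _ := sum_div_sq_le_maxNorm_smul_vecMulVec_self hs0
  · calc _ ≤ M ^ 2 / ∑ i, v i :=
          maxNorm_smul_vecMulVec_self_le hs0 fun i =>
            (abs_mulVec_onesV_apply_le_l1Norm hsymm i).trans hL1
      _ ≤ M ^ 2 / (R⁻¹ * p) := div_le_div_of_nonneg_left (sq_nonneg _) (by positivity) hs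
      _ = R * M ^ 2 / p := by field_simp

/-- if the eigenvalues of `Ω₀` lie in `[1/R, R]` and `‖Ω₀‖_{L1} ≤ M_p`,
then `R⁻³/p ≤ ‖Ω₀ − Ω_c‖_max ≤ R M_p²/p`. -/
theorem identification_error_bounds (p : ℕ) (hp : 2 ≤ p)
    (Ω₀ : Matrix (Fin p) (Fin p) ℝ) (hΩ₀ : Ω₀.PosDef) (R M : ℝ) (hR : 1 < R) (hM : 0 < M)
    (heig : ∀ i, hΩ₀.isHermitian.eigenvalues i ∈ Set.Icc R⁻¹ R)
    (hL1 : l1Norm Ω₀ ≤ M) :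
    R⁻¹ ^ 3 / (p : ℝ) ≤ maxNorm (Ω₀ - OmegaC Ω₀) ∧
    maxNorm (Ω₀ - OmegaC Ω₀) ≤ R * M ^ 2 / (p : ℝ) :=
  identification_error_bounds_general p hp Ω₀ hΩ₀ R M hR heig hL1

end
end
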